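/- arXiv:2004.01121 — 2 statements merged into one kernel-verified Lean document; each statement's English description precedes it below -/
import Mathlib

section
/- (Benkart–Sottile–Stroomer) The tableau switching map S ∪ T ↦ ^S T ∪ S_T is an involution: applying the switching procedure to ^S T ∪ S_T returns S ∪ T. -/
open scoped BigOperators

namespace SLR

/-- A partition, given as the weakly decreasing, eventually zero sequence of its
parts (`p i` is the `(i+1)`-st part). -/
def IsPartitionFun (p : ℕ → ℕ) : Prop :=
  (∀ i, p (i + 1) ≤ p i) ∧ ∃ N, p N = 0

/-- A strict partition: the positive parts strictly decrease. -/
def IsStrictPartitionFun (p : ℕ → ℕ) : Prop :=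
  ∀ i, p (i + 1) < p i ∨ p (i + 1) = 0

/-- The number `l(λ)` of (nonzero) parts of a partition. -/
noncomputable def len (p : ℕ → ℕ) : ℕ := Set.ncard {i | p i ≠ 0}

/-- The size `|λ|` of a partition: the sum of its parts. -/
noncomputable def size (p : ℕ → ℕ) : ℕ := ∑ᶠ i, p i

/-- `(i,j)` (0-indexed row, column) is a cell of the Young diagram of `p`. -/
def YCell (p : ℕ → ℕ) (i j : ℕ) : Prop := j < p i

/-- `(i,j)` is a cell of the shifted diagram of the strict partition `p`:
row `i` has `p i` boxes starting in column `i`. -/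
def SCell (p : ℕ → ℕ) (i j : ℕ) : Prop := i ≤ j ∧ j < i + p i

/-- Cell of the skew Young diagram `ν/μ`. -/
def SkewYCell (nu mu : ℕ → ℕ) (i j : ℕ) : Prop := YCell nu i j ∧ ¬ YCell mu i j

/-- Cell of the skew shifted diagram `ν/μ`. -/
def SkewSCell (nu mu : ℕ → ℕ) (i j : ℕ) : Prop := SCell nu i j ∧ ¬ SCell mu i j

/-- Letters of the marked alphabet `1' < 1 < 2' < 2 < ⋯` are encoded by positive
integers: `k'` is encoded as `2k-1` and `k` as `2k`; the order of `ℕ` restricts to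
the order of the alphabet, and a letter is marked iff its code is odd.
`mval e` is the value `k` of the letter encoded by `e`. -/
def mval (e : ℕ) : ℕ := (e + 1) / 2

/-- A skew semistandard Young tableau of shape `ν/μ` (over the unmarked alphabet
`1 < 2 < ⋯`), encoded as the function giving the entry of each cell (`0` outside
the shape): rows weakly increase, columns strictly increase. -/
def IsSkewSSYT (nu mu : ℕ → ℕ) (T : ℕ → ℕ → ℕ) : Prop :=
  (∀ i j, T i j ≠ 0 ↔ SkewYCell nu mu i j) ∧
  (∀ i j j', j ≤ j' → SkewYCell nu mu i j → SkewYCell nu mu i j' → T i j ≤ T i j') ∧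
  (∀ i i' j, i < i' → SkewYCell nu mu i j → SkewYCell nu mu i' j → T i j < T i' j)

/-- A filling of the cells given by `cell` with letters of the marked alphabet
(encoded as above), with weakly increasing rows and columns, at most one `k'`
in each row and at most one `k` in each column, for every `k`. -/
def IsMarkedFilling (cell : ℕ → ℕ → Prop) (T : ℕ → ℕ → ℕ) : Prop :=
  (∀ i j, T i j ≠ 0 ↔ cell i j) ∧
  (∀ i j j', j ≤ j' → cell i j → cell i j' → T i j ≤ T i j') ∧
  (∀ i i' j, i ≤ i' → cell i j → cell i' j → T i j ≤ T i' j) ∧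
  (∀ i j j', j < j' → cell i j → cell i j' → T i j = T i j' → T i j % 2 = 0) ∧
  (∀ i i' j, i < i' → cell i j → cell i' j → T i j = T i' j → T i j % 2 = 1)

/-- The Schur function `s_p`, as a formal power series in the variables
`x_1, x_2, ⋯` (variable `x_{k+1}` is indexed by `k : ℕ`): the coefficient of the
monomial with exponents `d` is the number of semistandard Young tableaux of
shape `p` and content `d`. -/
noncomputable def schur (p : ℕ → ℕ) : MvPowerSeries ℕ ℚ :=
  fun d => (Nat.card {T : ℕ → ℕ → ℕ //
    IsSkewSSYT p (fun _ => 0) T ∧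
      ∀ k, d k = Set.ncard {c : ℕ × ℕ | T c.1 c.2 = k + 1}} : ℚ)

/-- The Schur Q-function `Q_p` of a strict partition `p`: the coefficient of the
monomial with exponents `d` is the number of shifted tableaux of shifted shape `p`
(fillings by the marked alphabet) of content `d`. -/
noncomputable def schurQ (p : ℕ → ℕ) : MvPowerSeries ℕ ℚ :=
  fun d => (Nat.card {T : ℕ → ℕ → ℕ //
    IsMarkedFilling (SCell p) T ∧
      ∀ k, d k = Set.ncard {c : ℕ × ℕ | mval (T c.1 c.2) = k + 1}} : ℚ)

/-- `P_λ = 2^{-l(λ)} Q_λ`. -/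
noncomputable def Pfun (p : ℕ → ℕ) : MvPowerSeries ℕ ℚ :=
  ((2 : ℚ) ^ len p)⁻¹ • schurQ p

/-- The content of a marked filling is `γ`: `γ k` is the number of entries equal
to `k+1` or `(k+1)'`. -/
def HasContent (T : ℕ → ℕ → ℕ) (γ : ℕ → ℕ) : Prop :=
  ∀ k, γ k = Set.ncard {c : ℕ × ℕ | mval (T c.1 c.2) = k + 1}

/-- The word of a skew shifted tableau: rows read left to right, bottom row first. -/
noncomputable def sword (nu mu : ℕ → ℕ) (T : ℕ → ℕ → ℕ) : List ℕ :=
  (List.range (len nu)).reverse.flatMap fun i =>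
    ((List.range (i + nu i)).filter fun j => decide (i + mu i ≤ j)).map (T i)

/-- The word of a filling of the Young diagram of `mu`: rows read left to right,
bottom row first. -/
noncomputable def yword (mu : ℕ → ℕ) (T : ℕ → ℕ → ℕ) : List ℕ :=
  (List.range (len mu)).reverse.flatMap fun i => (List.range (mu i)).map (T i)

/-- The statistics `m_i(j)`, `0 ≤ j ≤ 2n`, of a word `w` over the marked alphabet:
for `j ≤ n`, the multiplicity of (unmarked) `i` among `w_n, …, w_{n-j+1}`; for
`n < j ≤ 2n`, the multiplicity of `i'` among `w_1, …, w_{j-n}` plus the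
multiplicity of `i` in the whole word. -/
def mstat (w : List ℕ) (i j : ℕ) : ℕ :=
  if j ≤ w.length then (w.reverse.take j).count (2 * i)
  else (w.take (j - w.length)).count (2 * i - 1) + w.count (2 * i)

/-- `w` is a shifted lattice word. -/
def IsShiftedLatticeWord (w : List ℕ) : Prop :=
  ∀ i, 1 ≤ i → ∀ j,
    (j < w.length → mstat w i j = mstat w (i - 1) j →
      w.getD (w.length - j - 1) 0 ≠ 2 * i ∧ w.getD (w.length - j - 1) 0 ≠ 2 * i - 1) ∧
    (w.length ≤ j → j < 2 * w.length → mstat w i j = mstat w (i - 1) j →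
      w.getD (j - w.length) 0 ≠ 2 * (i - 1) ∧ w.getD (j - w.length) 0 ≠ 2 * i - 1)

/-- Condition (F1)/(G1): for every `k`, the leftmost of the letters `k, k'`
occurring in `w` is unmarked. -/
def LeftmostUnmarked (w : List ℕ) : Prop :=
  ∀ k p, 1 ≤ k → w.getD p 0 = 2 * k - 1 → ∃ q, q < p ∧ w.getD q 0 = 2 * k

/-- Stembridge's tableaux: skew shifted tableaux of shape `ν/μ` and content `λ`
satisfying (F1) and (F2). -/
def IsStembridgeTab (lam mu nu : ℕ → ℕ) (T : ℕ → ℕ → ℕ) : Prop :=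
  IsMarkedFilling (SkewSCell nu mu) T ∧ HasContent T lam ∧
  LeftmostUnmarked (sword nu mu T) ∧ IsShiftedLatticeWord (sword nu mu T)

/-- The number given to the cell `(i,j)` of the skew shifted diagram `ν/μ` by the
shifted reverse filling (rows top to bottom, right to left within each row). -/
def srfNum (nu mu : ℕ → ℕ) (i j : ℕ) : ℕ :=
  (∑ r ∈ Finset.range i, (nu r - mu r)) + (i + nu i - j)

/-- The number given to the cell `(i,j)` of the skew Young diagram `ν/λ` by the
reverse filling (rows top to bottom, right to left within each row). -/
def yrfNum (nu la : ℕ → ℕ) (i j : ℕ) : ℕ :=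
  (∑ r ∈ Finset.range i, (nu r - la r)) + (nu i - j)

/-- Rank of an encoded letter in the order `1 < 2 < ⋯ < N < N' < ⋯ < 2' < 1'`. -/
def rnk (N e : ℕ) : ℕ := if e % 2 = 0 then e / 2 else 2 * N + 1 - (e + 1) / 2

/-- The list of entries of row `i` of a filling of the Young diagram of `sh`. -/
def rowL (sh : ℕ → ℕ) (T : ℕ → ℕ → ℕ) (i : ℕ) : List ℕ := (List.range (sh i)).map (T i)

/-- Row `i`, reordered according to the order `1 < 2 < ⋯ < N < N' < ⋯ < 2' < 1'`. -/
def rowS (N : ℕ) (sh : ℕ → ℕ) (T : ℕ → ℕ → ℕ) (i : ℕ) : List ℕ :=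
  (rowL sh T i).mergeSort fun a b => decide (rnk N a ≤ rnk N b)

/-- The number of entries of row `i` of rank less than `r` in the order
`1 < 2 < ⋯ < N < N' < ⋯ < 2' < 1'`. -/
def cntLess (N : ℕ) (sh : ℕ → ℕ) (T : ℕ → ℕ → ℕ) (i r : ℕ) : ℕ :=
  (rowL sh T i).countP fun e => decide (rnk N e < r)

/-- Condition (C4) on a labelled tableau of shape `sh`. -/
def C4 (N : ℕ) (sh : ℕ → ℕ) (T : ℕ → ℕ → ℕ) : Prop :=
  (∀ i c, c < sh (i + 1) →
    rnk N ((rowS N sh T i).getD c 0) < rnk N ((rowS N sh T (i + 1)).getD c 0)) ∧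
  (∀ i j, 1 ≤ i → 1 ≤ j → (2 * j - 1) ∈ rowL sh T i →
    cntLess N sh T i j < cntLess N sh T (i - 1) j) ∧
  (∀ i j, 1 ≤ j → (2 * j) ∈ rowL sh T i →
    cntLess N sh T (i + 1) (2 * N + 1 - j) < cntLess N sh T i (2 * N + 1 - j))

/-- Membership in the set `Õ(ν/μ)`: `T` is a filling of the (unshifted) Young
diagram of `sh` by the alphabet `1' < 1 < ⋯ < N' < N` (`N = |ν/μ|`), where for
each `1 ≤ k ≤ N` exactly one of `k, k'` occurs, satisfying the conditions
(C1)–(C4) relative to the shifted reverse filling of `ν/μ`. -/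
def InOtilde (nu mu sh : ℕ → ℕ) (T : ℕ → ℕ → ℕ) : Prop :=
  (∀ i j, T i j ≠ 0 ↔ YCell sh i j) ∧
  (∀ i j, YCell sh i j → T i j ≤ 2 * (size nu - size mu)) ∧
  (∀ k, 1 ≤ k → k ≤ size nu - size mu →
      ∃! c : ℕ × ℕ, YCell sh c.1 c.2 ∧ mval (T c.1 c.2) = k) ∧
  -- (C1): if `k` and `k+1` lie in the same row of the shifted reverse filling,
  -- then the entry of value `k+1` lies weakly above the entry of value `k` when
  -- the latter is unmarked, and strictly above it when it is marked.
  (∀ k i j, SkewSCell nu mu i j → SkewSCell nu mu i (j + 1) → srfNum nu mu i (j + 1) = k →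
    ∀ a b a' b', YCell sh a b → YCell sh a' b' →
      mval (T a b) = k → mval (T a' b') = k + 1 →
        (T a b % 2 = 0 → a' ≤ a) ∧ (T a b % 2 = 1 → a' < a)) ∧
  -- (C2): if `h` lies directly below `k` in the shifted reverse filling, then the
  -- entry of value `h` lies weakly below the entry of value `k` when the latter is
  -- marked, and strictly below it when it is unmarked.
  (∀ i j, SkewSCell nu mu i j → SkewSCell nu mu (i + 1) j →
    ∀ a b a' b', YCell sh a b → YCell sh a' b' →
      mval (T a b) = srfNum nu mu i j → mval (T a' b') = srfNum nu mu (i + 1) j →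
        (T a b % 2 = 1 → a ≤ a') ∧ (T a b % 2 = 0 → a < a')) ∧
  -- (C3): the rightmost letter in each row is unmarked.
  (∀ i j, YCell sh i j → ¬ YCell sh i (j + 1) → T i j % 2 = 0) ∧
  C4 (size nu - size mu) sh T

/-- Schensted row-insertion of `x` into a tableau given as its list of rows. -/
def insert1 : List (List ℕ) → ℕ → List (List ℕ)
  | [], x => [[x]]
  | r :: rs, x =>
    match r.findIdx? (fun y => decide (x < y)) with
    | none => (r ++ [x]) :: rs
    | some j => (r.set j x) :: insert1 rs (r.getD j 0)

/-- The reading word of a tableau given as its list of rows: rows left to right,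
bottom row first. -/
def lword (U : List (List ℕ)) : List ℕ := U.reverse.flatten

/-- The product tableau `A.U`: row-insert the letters of the word of `U`
successively into `A`. -/
def prodT (A U : List (List ℕ)) : List (List ℕ) := (lword U).foldl insert1 A

/-- The transpose of a tableau given as its list of rows. -/
def transposeL (U : List (List ℕ)) : List (List ℕ) :=
  (List.range (U.headD []).length).map fun j => U.filterMap fun r => r[j]?

/-- `U` (as a list of rows) is a standard Young tableau of shape `mu`. -/
def IsSYTL (mu : ℕ → ℕ) (U : List (List ℕ)) : Prop :=
  U.length = len mu ∧
  (∀ i, (U.getD i []).length = mu i) ∧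
  (U.flatten).Perm (List.range' 1 (size mu)) ∧
  (∀ i j, j + 1 < mu i → (U.getD i []).getD j 0 < (U.getD i []).getD (j + 1) 0) ∧
  (∀ i j, j < mu (i + 1) → (U.getD i []).getD j 0 < (U.getD (i + 1) []).getD j 0)

/-- `U` (as a list of rows) is a semistandard Young tableau of shape `mu`. -/
def IsSSYTL (mu : ℕ → ℕ) (U : List (List ℕ)) : Prop :=
  U.length = len mu ∧
  (∀ i, (U.getD i []).length = mu i) ∧
  (∀ i j, j < mu i → 1 ≤ (U.getD i []).getD j 0) ∧
  (∀ i j, j + 1 < mu i → (U.getD i []).getD j 0 ≤ (U.getD i []).getD (j + 1) 0) ∧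
  (∀ i j, j < mu (i + 1) → (U.getD i []).getD j 0 < (U.getD (i + 1) []).getD j 0)

/-- The entry of the canonical standard shifted tableau `T_λ` (filled row by row,
from top to bottom and left to right, with `1, 2, …, n`) at shifted cell `(r,c)`. -/
def tval (lam : ℕ → ℕ) (r c : ℕ) : ℕ := (∑ t ∈ Finset.range r, lam t) + (c - r) + 1

/-- Row `i` of `s(T_λ)`, the tableau obtained by gluing `T_λ` and its reflection
through the main diagonal along that diagonal (diagonal boxes doubled). -/
def sTrow (lam : ℕ → ℕ) (i : ℕ) : List ℕ :=
  ((List.range i).filterMap fun c => if i < c + lam c then some (tval lam c i) else none)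
    ++ (if 0 < lam i then [tval lam i i] else [])
    ++ ((List.range (lam i)).map fun t => tval lam i (i + t))

/-- `s(T_λ)` as a list of rows. -/
def sT (lam : ℕ → ℕ) : List (List ℕ) := (List.range (lam 0)).map (sTrow lam)

/-- Update of a filling at one cell. -/
def upd2 (T : ℕ → ℕ → ℕ) (i j v : ℕ) : ℕ → ℕ → ℕ :=
  fun a b => if a = i ∧ b = j then v else T a b

/-- One jeu de taquin slide, starting with the hole at `(i,j)`: repeatedly move
into the hole the smaller of its right and lower neighbours (the lower one in case
of a tie), until both are missing (`fuel` is a recursion bound). -/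
def slideAux : ℕ → (ℕ → ℕ → ℕ) → ℕ → ℕ → (ℕ → ℕ → ℕ)
  | 0, T, _, _ => T
  | fuel + 1, T, i, j =>
    let r := T i (j + 1)
    let d := T (i + 1) j
    if r = 0 ∧ d = 0 then T
    else if d = 0 ∨ (r ≠ 0 ∧ r < d) then
      slideAux fuel (upd2 (upd2 T i j r) i (j + 1) 0) i (j + 1)
    else
      slideAux fuel (upd2 (upd2 T i j d) (i + 1) j 0) (i + 1) j

/-- The last index of a nonzero entry of a list. -/
def lastPos (l : List ℕ) : Option ℕ :=
  (List.range l.length).reverse.find? fun i => decide (l.getD i 0 ≠ 0)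

/-- Jeu de taquin rectification of a skew Young tableau whose inner shape is the
partition `m` (as a list): while `m` is nonempty, slide out the inner corner at the
end of the last row of `m`.  Since the rectification is independent of the choice
of inner corners, this computes the rectification. -/
def rectSteps (B : ℕ) : ℕ → List ℕ → (ℕ → ℕ → ℕ) → (ℕ → ℕ → ℕ)
  | 0, _, T => T
  | steps + 1, m, T =>
    match lastPos m with
    | none => T
    | some r => rectSteps B steps (m.set r (m.getD r 0 - 1)) (slideAux B T r (m.getD r 0 - 1))

/-- Shifted jeu de taquin rectification of a skew shifted tableau whose inner
(strict) shape is `m`: while `m` is nonempty, slide out the inner corner at the end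
of the last row of `m`. -/
def srectSteps (B : ℕ) : ℕ → List ℕ → (ℕ → ℕ → ℕ) → (ℕ → ℕ → ℕ)
  | 0, _, T => T
  | steps + 1, m, T =>
    match lastPos m with
    | none => T
    | some r =>
      srectSteps B steps (m.set r (m.getD r 0 - 1)) (slideAux B T r (r + m.getD r 0 - 1))

/-- The list `[μ_1, …, μ_l]` of parts of a partition given as a function. -/
noncomputable def muList (mu : ℕ → ℕ) : List ℕ := (List.range (len mu)).map mu

/-- Jeu de taquin rectification of a filling of the skew Young diagram `ν/μ`. -/
noncomputable def RectOf (nu mu : ℕ → ℕ) (T : ℕ → ℕ → ℕ) : ℕ → ℕ → ℕ :=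
  rectSteps (size nu + len nu + nu 0 + 2) (size mu) (muList mu) T

/-- Shifted jeu de taquin rectification of a filling of the skew shifted
diagram `ν/μ`. -/
noncomputable def sRectOf (nu mu : ℕ → ℕ) (T : ℕ → ℕ → ℕ) : ℕ → ℕ → ℕ :=
  srectSteps (size nu + len nu + nu 0 + 2) (size mu) (muList mu) T

/-- `s(T)`: glue an (unmarked) skew shifted tableau `T` with its reflection through
the main diagonal, the diagonal boxes being doubled. -/
def glue (T : ℕ → ℕ → ℕ) : ℕ → ℕ → ℕ := fun i j => if j ≤ i then T j i else T i (j - 1)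

/-- `λ̃`: the partition whose Young diagram is the union of the shifted diagram of
the strict partition `λ` and its reflection through the main diagonal. -/
noncomputable def tilde (lam : ℕ → ℕ) : ℕ → ℕ :=
  fun i => Set.ncard {j | SCell lam i j ∨ SCell lam j i}

/-- The list of rows of `λ̃`. -/
noncomputable def tildeList (lam : ℕ → ℕ) : List ℕ := (List.range (lam 0)).map (tilde lam)

/-- The conjugate (transpose) partition `μ^t`. -/
noncomputable def conj (mu : ℕ → ℕ) : ℕ → ℕ := fun i => Set.ncard {j | i < mu j}

/-- A standard skew shifted tableau of shape `ν/μ`: no marked entries, entries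
`1, 2, …, |ν/μ|`, each occurring exactly once, increasing along rows and columns. -/
def IsStdSkewShifted (nu mu : ℕ → ℕ) (T : ℕ → ℕ → ℕ) : Prop :=
  (∀ i j, T i j ≠ 0 ↔ SkewSCell nu mu i j) ∧
  (∀ i j, SkewSCell nu mu i j → T i j ≤ size nu - size mu) ∧
  (∀ i j j', j < j' → SkewSCell nu mu i j → SkewSCell nu mu i j' → T i j < T i j') ∧
  (∀ i i' j, i < i' → SkewSCell nu mu i j → SkewSCell nu mu i' j → T i j < T i' j) ∧
  (∀ k, 1 ≤ k → k ≤ size nu - size mu → ∃! c : ℕ × ℕ, T c.1 c.2 = k)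

/-- A skew shifted semistandard tableau with no marked entries: rows weakly
increasing, columns strictly increasing. -/
def IsSkewShiftedSSYT (nu mu : ℕ → ℕ) (T : ℕ → ℕ → ℕ) : Prop :=
  (∀ i j, T i j ≠ 0 ↔ SkewSCell nu mu i j) ∧
  (∀ i j j', j ≤ j' → SkewSCell nu mu i j → SkewSCell nu mu i j' → T i j ≤ T i j') ∧
  (∀ i i' j, i < i' → SkewSCell nu mu i j → SkewSCell nu mu i' j → T i j < T i' j)

/-- The map sending a skew shifted tableau `T` of shape `ν/μ` with word
`w(T) = w_1 ⋯ w_N` to the tableau of unshifted shape in which, for each `i`, the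
value `N+1-i` (marked iff `w_i` is marked) is placed in row `k`, where
`w_i ∈ {k, k'}` (each row filled from left to right as `i` decreases). -/
noncomputable def stemToO (nu mu : ℕ → ℕ) (T : ℕ → ℕ → ℕ) : ℕ → ℕ → ℕ := fun k c =>
  (let w := sword nu mu T
   (List.range w.length).filterMap fun t =>
     let e := w.getD (w.length - t - 1) 0
     if mval e = k + 1 then
       some (if e % 2 = 1 then 2 * (t + 1) - 1 else 2 * (t + 1))
     else none).getD c 0

/-- A perforated tableau of shape `γ`: a partial filling (0 = empty) of the cells
of `γ`, with strictly increasing columns, such that every entry weakly northwest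
of an entry is at most that entry. -/
def IsPerforated (γ : ℕ → ℕ → Prop) (S : ℕ → ℕ → ℕ) : Prop :=
  (∀ i j, S i j ≠ 0 → γ i j) ∧
  (∀ i i' j, i < i' → S i j ≠ 0 → S i' j ≠ 0 → S i j < S i' j) ∧
  (∀ i j i' j', i' ≤ i → j' ≤ j → S i' j' ≠ 0 → S i j ≠ 0 → S i' j' ≤ S i j)

/-- One step of the switching procedure on a perforated pair `(S,T)` filling `γ`:
interchange an entry `s` of `S` with an adjacent entry `t` of `T` lying directly
below or directly to the right of `s`, provided both parts remain perforated
tableaux of `γ`. -/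
def SwitchStep (γ : ℕ → ℕ → Prop) (p q : (ℕ → ℕ → ℕ) × (ℕ → ℕ → ℕ)) : Prop :=
  ∃ i j i' j', p.1 i j ≠ 0 ∧ p.2 i' j' ≠ 0 ∧
    ((i' = i ∧ j' = j + 1) ∨ (i' = i + 1 ∧ j' = j)) ∧
    q.1 = upd2 (upd2 p.1 i j 0) i' j' (p.1 i j) ∧
    q.2 = upd2 (upd2 p.2 i' j' 0) i j (p.2 i' j') ∧
    IsPerforated γ q.1 ∧ IsPerforated γ q.2

/-- The result of the switching procedure applied to the pair `p = (S,T)`: the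
(unique) pair reachable from `p` by switching steps to which no further step
applies; its first component is `S_T` and its second is `^S T`. -/
noncomputable def switchResult (γ : ℕ → ℕ → Prop) (p : (ℕ → ℕ → ℕ) × (ℕ → ℕ → ℕ)) :
    (ℕ → ℕ → ℕ) × (ℕ → ℕ → ℕ) :=
  Classical.epsilon fun q =>
    Relation.ReflTransGen (SwitchStep γ) p q ∧ ∀ r, ¬ SwitchStep γ q r

/-- The Schur Q-function, with integer coefficients. -/
noncomputable def schurQZ (p : ℕ → ℕ) : MvPowerSeries ℕ ℤ :=
  fun d => (Nat.card {T : ℕ → ℕ → ℕ //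
    IsMarkedFilling (SCell p) T ∧
      ∀ k, d k = Set.ncard {c : ℕ × ℕ | mval (T c.1 c.2) = k + 1}} : ℤ)


section SwitchInvolutionAux

variable {γ : ℕ → ℕ → Prop}

/-- Move the entry at `(a,b)` to `(a',b')` (setting the source to `0`). -/
def mv (X : ℕ → ℕ → ℕ) (a b a' b' : ℕ) : ℕ → ℕ → ℕ :=
  upd2 (upd2 X a b 0) a' b' (X a b)

lemma mv_tgt (X : ℕ → ℕ → ℕ) (a b a' b' : ℕ) : mv X a b a' b' a' b' = X a b := by
  simp [mv, upd2]

lemma mv_src (X : ℕ → ℕ → ℕ) {a b a' b' : ℕ} (h : ¬(a = a' ∧ b = b')) :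
    mv X a b a' b' a b = 0 := by
  simp [mv, upd2, h]

lemma mv_other (X : ℕ → ℕ → ℕ) {a b a' b' x y : ℕ} (h1 : ¬(x = a ∧ y = b))
    (h2 : ¬(x = a' ∧ y = b')) : mv X a b a' b' x y = X x y := by
  simp [mv, upd2, h1, h2]

/-- The invariant maintained during switching: both components are perforated
tableaux of `γ`, with disjoint supports that together cover `γ`. -/
def Filling (γ : ℕ → ℕ → Prop) (p : (ℕ → ℕ → ℕ) × (ℕ → ℕ → ℕ)) : Prop :=
  IsPerforated γ p.1 ∧ IsPerforated γ p.2 ∧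
    (∀ i j, p.1 i j ≠ 0 → p.2 i j = 0) ∧
    (∀ i j, γ i j → p.1 i j ≠ 0 ∨ p.2 i j ≠ 0)

lemma step_vals {p q : (ℕ → ℕ → ℕ) × (ℕ → ℕ → ℕ)} {i j i' j' : ℕ}
    (adj : (i' = i ∧ j' = j + 1) ∨ (i' = i + 1 ∧ j' = j))
    (hq1 : q.1 = upd2 (upd2 p.1 i j 0) i' j' (p.1 i j))
    (hq2 : q.2 = upd2 (upd2 p.2 i' j' 0) i j (p.2 i' j')) :
    q.1 i' j' = p.1 i j ∧ q.1 i j = 0 ∧ q.2 i j = p.2 i' j' ∧ q.2 i' j' = 0 ∧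
      (∀ x y, ¬(x = i ∧ y = j) → ¬(x = i' ∧ y = j') → q.1 x y = p.1 x y) ∧
      (∀ x y, ¬(x = i ∧ y = j) → ¬(x = i' ∧ y = j') → q.2 x y = p.2 x y) := by
  have nead : ¬(i = i' ∧ j = j') := by rcases adj with ⟨rfl, rfl⟩ | ⟨rfl, rfl⟩ <;> omega
  have neda : ¬(i' = i ∧ j' = j) := by rcases adj with ⟨rfl, rfl⟩ | ⟨rfl, rfl⟩ <;> omega
  refine ⟨?_, ?_, ?_, ?_, ?_, ?_⟩
  · rw [hq1]; exact mv_tgt p.1 i j i' j'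
  · rw [hq1]; exact mv_src p.1 nead
  · rw [hq2]; exact mv_tgt p.2 i' j' i j
  · rw [hq2]; exact mv_src p.2 neda
  · intro x y h0 h1; rw [hq1]; exact mv_other p.1 h0 h1
  · intro x y h0 h1; rw [hq2]; exact mv_other p.2 h1 h0

lemma step_inv {p q : (ℕ → ℕ → ℕ) × (ℕ → ℕ → ℕ)} (hF : Filling γ p)
    (h : SwitchStep γ p q) : Filling γ q := by
  obtain ⟨i, j, i', j', hs, ht, adj, hq1, hq2, hperf1, hperf2⟩ := h
  obtain ⟨v1, v2, v3, v4, v5, v6⟩ := step_vals adj hq1 hq2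
  refine ⟨hperf1, hperf2, ?_, ?_⟩
  · intro x y hx
    by_cases h1 : x = i' ∧ y = j'
    · rw [h1.1, h1.2, v4]
    · by_cases h0 : x = i ∧ y = j
      · exfalso; apply hx; rw [h0.1, h0.2, v2]
      · rw [v6 x y h0 h1]
        apply hF.2.2.1
        rwa [v5 x y h0 h1] at hx
  · intro x y hγ
    by_cases h0 : x = i ∧ y = j
    · right; rw [h0.1, h0.2, v3]; exact ht
    · by_cases h1 : x = i' ∧ y = j'
      · left; rw [h1.1, h1.2, v1]; exact hs
      · rw [v5 x y h0 h1, v6 x y h0 h1]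
        exact hF.2.2.2 x y hγ

lemma step_rev {p q : (ℕ → ℕ → ℕ) × (ℕ → ℕ → ℕ)} (hF : Filling γ p)
    (h : SwitchStep γ p q) : SwitchStep γ (q.2, q.1) (p.2, p.1) := by
  obtain ⟨i, j, i', j', hs, ht, adj, hq1, hq2, hperf1, hperf2⟩ := h
  obtain ⟨v1, v2, v3, v4, v5, v6⟩ := step_vals adj hq1 hq2
  have nead : ¬(i = i' ∧ j = j') := by rcases adj with ⟨rfl, rfl⟩ | ⟨rfl, rfl⟩ <;> omega
  have neda : ¬(i' = i ∧ j' = j) := by rcases adj with ⟨rfl, rfl⟩ | ⟨rfl, rfl⟩ <;> omega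
  have key2 : p.2 = mv q.2 i j i' j' := by
    funext x y
    by_cases h1 : x = i' ∧ y = j'
    · rw [h1.1, h1.2, mv_tgt, v3]
    · by_cases h0 : x = i ∧ y = j
      · rw [h0.1, h0.2, mv_src q.2 nead]
        exact hF.2.2.1 i j hs
      · rw [mv_other q.2 h0 h1]
        exact (v6 x y h0 h1).symm
  have key1 : p.1 = mv q.1 i' j' i j := by
    funext x y
    by_cases h0 : x = i ∧ y = j
    · rw [h0.1, h0.2, mv_tgt, v1]
    · by_cases h1 : x = i' ∧ y = j'
      · rw [h1.1, h1.2, mv_src q.1 neda]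
        by_contra hne
        exact ht (hF.2.2.1 i' j' hne)
      · rw [mv_other q.1 h1 h0]
        exact (v5 x y h0 h1).symm
  exact ⟨i, j, i', j', by show q.2 i j ≠ 0; rw [v3]; exact ht,
    by show q.1 i' j' ≠ 0; rw [v1]; exact hs, adj, key2, key1, hF.2.1, hF.1⟩

/-- Two switch steps out of the same source cell are impossible. -/
lemma no_two_targets {P2 : ℕ → ℕ → ℕ} {i j : ℕ}
    (ht1 : P2 i (j + 1) ≠ 0) (ht2 : P2 (i + 1) j ≠ 0)
    (h1 : IsPerforated γ (mv P2 i (j + 1) i j))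
    (h2 : IsPerforated γ (mv P2 (i + 1) j i j)) : False := by
  have e1 : mv P2 i (j + 1) i j i j = P2 i (j + 1) := mv_tgt _ _ _ _ _
  have e2 : mv P2 i (j + 1) i j (i + 1) j = P2 (i + 1) j :=
    mv_other _ (by omega) (by omega)
  have lt1 : P2 i (j + 1) < P2 (i + 1) j := by
    have := h1.2.1 i (i + 1) j (by omega) (by rw [e1]; exact ht1)
      (by rw [e2]; exact ht2)
    rwa [e1, e2] at this
  have e3 : mv P2 (i + 1) j i j i j = P2 (i + 1) j := mv_tgt _ _ _ _ _
  have e4 : mv P2 (i + 1) j i j i (j + 1) = P2 i (j + 1) :=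
    mv_other _ (by omega) (by omega)
  have le1 : P2 (i + 1) j ≤ P2 i (j + 1) := by
    have := h2.2.2 i (j + 1) i j (le_refl i) (by omega)
      (by rw [e3]; exact ht2) (by rw [e4]; exact ht1)
    rwa [e3, e4] at this
  omega

/-- Two switch steps into the same target cell are impossible. -/
lemma no_two_sources {P1 : ℕ → ℕ → ℕ} {i j : ℕ}
    (hs1 : P1 (i + 1) j ≠ 0) (hs2 : P1 i (j + 1) ≠ 0)
    (h1 : IsPerforated γ (mv P1 (i + 1) j (i + 1) (j + 1)))
    (h2 : IsPerforated γ (mv P1 i (j + 1) (i + 1) (j + 1))) : False := by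
  have e1 : mv P1 (i + 1) j (i + 1) (j + 1) (i + 1) (j + 1) = P1 (i + 1) j :=
    mv_tgt _ _ _ _ _
  have e2 : mv P1 (i + 1) j (i + 1) (j + 1) i (j + 1) = P1 i (j + 1) :=
    mv_other _ (by omega) (by omega)
  have lt1 : P1 i (j + 1) < P1 (i + 1) j := by
    have := h1.2.1 i (i + 1) (j + 1) (by omega) (by rw [e2]; exact hs2)
      (by rw [e1]; exact hs1)
    rwa [e1, e2] at this
  have e3 : mv P1 i (j + 1) (i + 1) (j + 1) (i + 1) (j + 1) = P1 i (j + 1) :=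
    mv_tgt _ _ _ _ _
  have e4 : mv P1 i (j + 1) (i + 1) (j + 1) (i + 1) j = P1 (i + 1) j :=
    mv_other _ (by omega) (by omega)
  have le1 : P1 (i + 1) j ≤ P1 i (j + 1) := by
    have := h2.2.2 (i + 1) (j + 1) (i + 1) j (le_refl _) (by omega)
      (by rw [e4]; exact hs1) (by rw [e3]; exact hs2)
    rwa [e3, e4] at this
  omega

lemma mv_comm {X : ℕ → ℕ → ℕ} {a1 b1 a1' b1' a2 b2 a2' b2' : ℕ}
    (ne1 : ¬(a1 = a1' ∧ b1 = b1')) (ne2 : ¬(a2 = a2' ∧ b2 = b2'))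
    (nss : ¬(a1 = a2 ∧ b1 = b2)) (ntt : ¬(a1' = a2' ∧ b1' = b2'))
    (nst : ¬(a1 = a2' ∧ b1 = b2')) (nts : ¬(a2 = a1' ∧ b2 = b1')) :
    mv (mv X a1 b1 a1' b1') a2 b2 a2' b2' = mv (mv X a2 b2 a2' b2') a1 b1 a1' b1' := by
  funext x y
  simp only [mv, upd2]
  split_ifs <;> first | rfl | (exfalso; omega)

/-- The key combinatorial fact for the hard pair (south-east moves, column
strictness). -/
lemma hard_col_SE {X : ℕ → ℕ → ℕ} {a1 b1 a1' b1' a2 b2 a2' b2' : ℕ}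
    (hP : IsPerforated γ X)
    (adj1 : (a1' = a1 ∧ b1' = b1 + 1) ∨ (a1' = a1 + 1 ∧ b1' = b1))
    (adj2 : (a2' = a2 ∧ b2' = b2 + 1) ∨ (a2' = a2 + 1 ∧ b2' = b2))
    (hs1 : X a1 b1 ≠ 0) (hs2 : X a2 b2 ≠ 0)
    (nss : ¬(a1 = a2 ∧ b1 = b2)) (nst : ¬(a1 = a2' ∧ b1 = b2'))
    (nts : ¬(a2 = a1' ∧ b2 = b1'))
    (hQ1 : IsPerforated γ (mv X a1 b1 a1' b1'))
    (hQ2 : IsPerforated γ (mv X a2 b2 a2' b2'))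
    (hcc : b1' = b2') (hlt : a1' < a2') : X a1 b1 < X a2 b2 := by
  rcases adj1 with ⟨e1a, e1b⟩ | ⟨e1a, e1b⟩
  · -- σ1 horizontal
    rcases adj2 with ⟨e2a, e2b⟩ | ⟨e2a, e2b⟩
    · -- both horizontal: sources in the same column
      have hb : b2 = b1 := by omega
      rw [hb]
      exact hP.2.1 a1 a2 b1 (by omega) hs1 (hb ▸ hs2)
    · -- σ2 vertical
      have ha : a1 < a2 := by
        rcases Nat.lt_or_ge a1 a2 with h | h
        · exact h
        · exact absurd (show a2 = a1' ∧ b2 = b1' by omega) nts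
      have e1 : mv X a1 b1 a1' b1' a1' b2 = X a1 b1 := by
        rw [show b2 = b1' from by omega]; exact mv_tgt _ _ _ _ _
      have e2 : mv X a1 b1 a1' b1' a2 b2 = X a2 b2 := mv_other _ (by omega) (by omega)
      have := hQ1.2.1 a1' a2 b2 (by omega) (by rw [e1]; exact hs1)
        (by rw [e2]; exact hs2)
      rwa [e1, e2] at this
  · -- σ1 vertical: use the second single move
    have e1 : mv X a2 b2 a2' b2' a1 b1 = X a1 b1 := mv_other _ nss nst
    have e2 : mv X a2 b2 a2' b2' a2' b1 = X a2 b2 := by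
      rw [show b1 = b2' from by omega]; exact mv_tgt _ _ _ _ _
    have := hQ2.2.1 a1 a2' b1 (by omega) (by rw [e1]; exact hs1)
      (by rw [e2]; exact hs2)
    rwa [e1, e2] at this

/-- The key combinatorial fact for the hard pair (south-east moves, weak
north-west monotonicity). -/
lemma hard_nw_SE {X : ℕ → ℕ → ℕ} {a1 b1 a1' b1' a2 b2 a2' b2' : ℕ}
    (adj1 : (a1' = a1 ∧ b1' = b1 + 1) ∨ (a1' = a1 + 1 ∧ b1' = b1))
    (hs1 : X a1 b1 ≠ 0) (hs2 : X a2 b2 ≠ 0)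
    (nss : ¬(a1 = a2 ∧ b1 = b2)) (nst : ¬(a1 = a2' ∧ b1 = b2'))
    (hQ2 : IsPerforated γ (mv X a2 b2 a2' b2'))
    (hle1 : a1' ≤ a2') (hle2 : b1' ≤ b2') : X a1 b1 ≤ X a2 b2 := by
  have hadj : a1 ≤ a1' ∧ b1 ≤ b1' := by
    rcases adj1 with ⟨h, h'⟩ | ⟨h, h'⟩ <;> omega
  have e1 : mv X a2 b2 a2' b2' a1 b1 = X a1 b1 := mv_other _ nss nst
  have e2 : mv X a2 b2 a2' b2' a2' b2' = X a2 b2 := mv_tgt _ _ _ _ _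
  have := hQ2.2.2 a2' b2' a1 b1 (by omega) (by omega)
    (by rw [e1]; exact hs1) (by rw [e2]; exact hs2)
  rwa [e1, e2] at this

/-- The key combinatorial fact for the hard pair (north-west moves, column
strictness).  Here entries move from `(a,b)` to `(a',b')` with the source
south-east of the target. -/
lemma hard_col_NW {X : ℕ → ℕ → ℕ} {a1 b1 a1' b1' a2 b2 a2' b2' : ℕ}
    (hP : IsPerforated γ X)
    (adj1 : (a1 = a1' ∧ b1 = b1' + 1) ∨ (a1 = a1' + 1 ∧ b1 = b1'))
    (adj2 : (a2 = a2' ∧ b2 = b2' + 1) ∨ (a2 = a2' + 1 ∧ b2 = b2'))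
    (hs1 : X a1 b1 ≠ 0) (hs2 : X a2 b2 ≠ 0)
    (nss : ¬(a1 = a2 ∧ b1 = b2)) (nst : ¬(a1 = a2' ∧ b1 = b2'))
    (nts : ¬(a2 = a1' ∧ b2 = b1'))
    (hQ1 : IsPerforated γ (mv X a1 b1 a1' b1'))
    (hQ2 : IsPerforated γ (mv X a2 b2 a2' b2'))
    (hcc : b1' = b2') (hlt : a1' < a2') : X a1 b1 < X a2 b2 := by
  rcases adj2 with ⟨e2a, e2b⟩ | ⟨e2a, e2b⟩
  · -- σ2 horizontal
    rcases adj1 with ⟨e1a, e1b⟩ | ⟨e1a, e1b⟩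
    · -- both horizontal: sources in the same column
      have hb : b2 = b1 := by omega
      rw [hb]
      exact hP.2.1 a1 a2 b1 (by omega) hs1 (hb ▸ hs2)
    · -- σ1 vertical
      have ha : a1 < a2' := by
        rcases Nat.lt_or_ge a1 a2' with h | h
        · exact h
        · exact absurd (show a1 = a2' ∧ b1 = b2' by omega) nst
      have e1 : mv X a2 b2 a2' b2' a1 b1 = X a1 b1 := mv_other _ nss nst
      have e2 : mv X a2 b2 a2' b2' a2' b1 = X a2 b2 := by
        rw [show b1 = b2' from by omega]; exact mv_tgt _ _ _ _ _
      have := hQ2.2.1 a1 a2' b1 ha (by rw [e1]; exact hs1)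
        (by rw [e2]; exact hs2)
      rwa [e1, e2] at this
  · -- σ2 vertical: use the first single move
    have e1 : mv X a1 b1 a1' b1' a1' b1' = X a1 b1 := mv_tgt _ _ _ _ _
    have e2 : mv X a1 b1 a1' b1' a2 b1' = X a2 b2 := by
      rw [show (mv X a1 b1 a1' b1' a2 b1' : ℕ) = X a2 b1' from
        mv_other _ (by omega) (by omega)]
      rw [show b2 = b1' from by omega]
    have := hQ1.2.1 a1' a2 b1' (by omega) (by rw [e1]; exact hs1)
      (by rw [e2]; exact hs2)
    rwa [e1, e2] at this

/-- The key combinatorial fact for the hard pair (north-west moves, weak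
north-west monotonicity). -/
lemma hard_nw_NW {X : ℕ → ℕ → ℕ} {a1 b1 a1' b1' a2 b2 a2' b2' : ℕ}
    (adj2 : (a2 = a2' ∧ b2 = b2' + 1) ∨ (a2 = a2' + 1 ∧ b2 = b2'))
    (hs1 : X a1 b1 ≠ 0) (hs2 : X a2 b2 ≠ 0)
    (nss : ¬(a1 = a2 ∧ b1 = b2)) (nts : ¬(a2 = a1' ∧ b2 = b1'))
    (hQ1 : IsPerforated γ (mv X a1 b1 a1' b1'))
    (hle1 : a1' ≤ a2') (hle2 : b1' ≤ b2') : X a1 b1 ≤ X a2 b2 := by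
  have hadj : a2' ≤ a2 ∧ b2' ≤ b2 := by
    rcases adj2 with ⟨h, h'⟩ | ⟨h, h'⟩ <;> omega
  have e1 : mv X a1 b1 a1' b1' a1' b1' = X a1 b1 := mv_tgt _ _ _ _ _
  have e2 : mv X a1 b1 a1' b1' a2 b2 = X a2 b2 := mv_other _ (by omega) nts
  have := hQ1.2.2 a2 b2 a1' b1' (by omega) (by omega)
    (by rw [e1]; exact hs1) (by rw [e2]; exact hs2)
  rwa [e1, e2] at this

/-- Abstract form of the two-commuting-moves lemma: `E` is the result of the two
moves, `Y1`, `Y2` the single-move results, all given by their values. -/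
lemma perf_double_abstract {X Y1 Y2 E : ℕ → ℕ → ℕ} {a1 b1 a1' b1' a2 b2 a2' b2' : ℕ}
    (ntt : ¬(a1' = a2' ∧ b1' = b2'))
    (hY1t : Y1 a1' b1' = X a1 b1)
    (hY1o : ∀ x y, ¬(x = a1 ∧ y = b1) → ¬(x = a1' ∧ y = b1') → Y1 x y = X x y)
    (hY2t : Y2 a2' b2' = X a2 b2)
    (hY2o : ∀ x y, ¬(x = a2 ∧ y = b2) → ¬(x = a2' ∧ y = b2') → Y2 x y = X x y)
    (hEt1 : E a1' b1' = X a1 b1) (hEt2 : E a2' b2' = X a2 b2)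
    (hEs1 : E a1 b1 = 0) (hEs2 : E a2 b2 = 0)
    (hEo : ∀ x y, ¬(x = a1 ∧ y = b1) → ¬(x = a2 ∧ y = b2) →
      ¬(x = a1' ∧ y = b1') → ¬(x = a2' ∧ y = b2') → E x y = X x y)
    (hQ1 : IsPerforated γ Y1) (hQ2 : IsPerforated γ Y2)
    (hcol12 : b1' = b2' → a1' < a2' → X a1 b1 < X a2 b2)
    (hcol21 : b2' = b1' → a2' < a1' → X a2 b2 < X a1 b1)
    (hnw12 : a1' ≤ a2' → b1' ≤ b2' → X a1 b1 ≤ X a2 b2)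
    (hnw21 : a2' ≤ a1' → b2' ≤ b1' → X a2 b2 ≤ X a1 b1) :
    IsPerforated γ E := by
  have hE1 : ∀ x y, E x y ≠ 0 → ¬(x = a2' ∧ y = b2') → E x y = Y1 x y := by
    intro x y h h2
    by_cases c1 : x = a1' ∧ y = b1'
    · rw [c1.1, c1.2, hEt1, hY1t]
    · by_cases c2 : x = a1 ∧ y = b1
      · exfalso; apply h; rw [c2.1, c2.2]; exact hEs1
      · by_cases c3 : x = a2 ∧ y = b2
        · exfalso; apply h; rw [c3.1, c3.2]; exact hEs2
        · rw [hEo x y c2 c3 c1 h2, hY1o x y c2 c1]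
  have hE2 : ∀ x y, E x y ≠ 0 → ¬(x = a1' ∧ y = b1') → E x y = Y2 x y := by
    intro x y h h1
    by_cases c4 : x = a2' ∧ y = b2'
    · rw [c4.1, c4.2, hEt2, hY2t]
    · by_cases c2 : x = a1 ∧ y = b1
      · exfalso; apply h; rw [c2.1, c2.2]; exact hEs1
      · by_cases c3 : x = a2 ∧ y = b2
        · exfalso; apply h; rw [c3.1, c3.2]; exact hEs2
        · rw [hEo x y c2 c3 h1 c4, hY2o x y c3 c4]
  refine ⟨?_, ?_, ?_⟩
  · intro x y h
    by_cases c4 : x = a2' ∧ y = b2'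
    · rw [c4.1, c4.2]
      apply hQ2.1 a2' b2'
      rw [hY2t]
      rw [c4.1, c4.2, hEt2] at h
      exact h
    · exact hQ1.1 x y (by rw [← hE1 x y h c4]; exact h)
  · intro x x' y hlt h h'
    by_cases cC : x = a2' ∧ y = b2' <;> by_cases cD : x' = a2' ∧ y = b2'
    · exact absurd hlt (by omega)
    · by_cases cD1 : x' = a1' ∧ y = b1'
      · have g1 : E x y = X a2 b2 := by rw [cC.1, cC.2]; exact hEt2
        have g2 : E x' y = X a1 b1 := by rw [cD1.1, cD1.2]; exact hEt1
        rw [g1, g2]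
        exact hcol21 (by omega) (by omega)
      · have g1 : E x y = Y2 x y := by rw [cC.1, cC.2, hEt2, hY2t]
        have g2 : E x' y = Y2 x' y := hE2 x' y h' cD1
        rw [g1, g2]
        exact hQ2.2.1 x x' y hlt (by rw [← g1]; exact h) (by rw [← g2]; exact h')
    · by_cases cC1 : x = a1' ∧ y = b1'
      · have g1 : E x y = X a1 b1 := by rw [cC1.1, cC1.2]; exact hEt1
        have g2 : E x' y = X a2 b2 := by rw [cD.1, cD.2]; exact hEt2
        rw [g1, g2]
        exact hcol12 (by omega) (by omega)
      · have g1 : E x y = Y2 x y := hE2 x y h cC1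
        have g2 : E x' y = Y2 x' y := by rw [cD.1, cD.2, hEt2, hY2t]
        rw [g1, g2]
        exact hQ2.2.1 x x' y hlt (by rw [← g1]; exact h) (by rw [← g2]; exact h')
    · have g1 : E x y = Y1 x y := hE1 x y h cC
      have g2 : E x' y = Y1 x' y := hE1 x' y h' cD
      rw [g1, g2]
      exact hQ1.2.1 x x' y hlt (by rw [← g1]; exact h) (by rw [← g2]; exact h')
  · intro x y x' y' hii hjj h' h
    by_cases cC : x' = a2' ∧ y' = b2' <;> by_cases cD : x = a2' ∧ y = b2'
    · have g1 : E x' y' = X a2 b2 := by rw [cC.1, cC.2]; exact hEt2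
      have g2 : E x y = X a2 b2 := by rw [cD.1, cD.2]; exact hEt2
      rw [g1, g2]
    · by_cases cD1 : x = a1' ∧ y = b1'
      · have g1 : E x' y' = X a2 b2 := by rw [cC.1, cC.2]; exact hEt2
        have g2 : E x y = X a1 b1 := by rw [cD1.1, cD1.2]; exact hEt1
        rw [g1, g2]
        exact hnw21 (by omega) (by omega)
      · have g1 : E x' y' = Y2 x' y' := by rw [cC.1, cC.2, hEt2, hY2t]
        have g2 : E x y = Y2 x y := hE2 x y h cD1
        rw [g1, g2]
        exact hQ2.2.2 x y x' y' hii hjj (by rw [← g1]; exact h') (by rw [← g2]; exact h)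
    · by_cases cC1 : x' = a1' ∧ y' = b1'
      · have g1 : E x' y' = X a1 b1 := by rw [cC1.1, cC1.2]; exact hEt1
        have g2 : E x y = X a2 b2 := by rw [cD.1, cD.2]; exact hEt2
        rw [g1, g2]
        exact hnw12 (by omega) (by omega)
      · have g1 : E x' y' = Y2 x' y' := hE2 x' y' h' cC1
        have g2 : E x y = Y2 x y := by rw [cD.1, cD.2, hEt2, hY2t]
        rw [g1, g2]
        exact hQ2.2.2 x y x' y' hii hjj (by rw [← g1]; exact h') (by rw [← g2]; exact h)
    · have g1 : E x' y' = Y1 x' y' := hE1 x' y' h' cC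
      have g2 : E x y = Y1 x y := hE1 x y h cD
      rw [g1, g2]
      exact hQ1.2.2 x y x' y' hii hjj (by rw [← g1]; exact h') (by rw [← g2]; exact h)

/-- Two commuting moves preserve perforatedness. -/
lemma perf_double {X : ℕ → ℕ → ℕ} {a1 b1 a1' b1' a2 b2 a2' b2' : ℕ}
    (ne1 : ¬(a1 = a1' ∧ b1 = b1')) (ne2 : ¬(a2 = a2' ∧ b2 = b2'))
    (nss : ¬(a1 = a2 ∧ b1 = b2)) (ntt : ¬(a1' = a2' ∧ b1' = b2'))
    (nst : ¬(a1 = a2' ∧ b1 = b2')) (nts : ¬(a2 = a1' ∧ b2 = b1'))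
    (hQ1 : IsPerforated γ (mv X a1 b1 a1' b1'))
    (hQ2 : IsPerforated γ (mv X a2 b2 a2' b2'))
    (hcol12 : b1' = b2' → a1' < a2' → X a1 b1 < X a2 b2)
    (hcol21 : b2' = b1' → a2' < a1' → X a2 b2 < X a1 b1)
    (hnw12 : a1' ≤ a2' → b1' ≤ b2' → X a1 b1 ≤ X a2 b2)
    (hnw21 : a2' ≤ a1' → b2' ≤ b1' → X a2 b2 ≤ X a1 b1) :
    IsPerforated γ (mv (mv X a1 b1 a1' b1') a2 b2 a2' b2') := by
  refine perf_double_abstract ntt (mv_tgt _ _ _ _ _)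
    (fun x y h h' => mv_other _ h h')
    (mv_tgt _ _ _ _ _) (fun x y h h' => mv_other _ h h')
    ?_ ?_ ?_ (mv_src _ ne2) ?_ hQ1 hQ2 hcol12 hcol21 hnw12 hnw21
  · -- E at the first target
    rw [show mv (mv X a1 b1 a1' b1') a2 b2 a2' b2' a1' b1' =
        mv X a1 b1 a1' b1' a1' b1' from mv_other _ (by omega) ntt]
    exact mv_tgt _ _ _ _ _
  · -- E at the second target
    rw [mv_tgt]
    exact mv_other _ (by omega) nts
  · -- E at the first source
    rw [show mv (mv X a1 b1 a1' b1') a2 b2 a2' b2' a1 b1 =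
        mv X a1 b1 a1' b1' a1 b1 from mv_other _ nss nst]
    exact mv_src _ ne1
  · -- E elsewhere
    intro x y c1 c2 c3 c4
    rw [show mv (mv X a1 b1 a1' b1') a2 b2 a2' b2' x y =
        mv X a1 b1 a1' b1' x y from mv_other _ c2 c4]
    exact mv_other _ c1 c3

lemma diamond {p q1 q2 : (ℕ → ℕ → ℕ) × (ℕ → ℕ → ℕ)}
    (h1 : SwitchStep γ p q1 ∧ Filling γ p) (h2 : SwitchStep γ p q2 ∧ Filling γ p) :
    ∃ e, Relation.ReflGen (fun a b => SwitchStep γ a b ∧ Filling γ a) q1 e ∧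
      Relation.ReflTransGen (fun a b => SwitchStep γ a b ∧ Filling γ a) q2 e := by
  obtain ⟨hstep1, hF⟩ := h1
  obtain ⟨hstep2, -⟩ := h2
  obtain ⟨i1, j1, i1', j1', hs1, ht1, adj1, hq11, hq12, hperf11, hperf12⟩ := hstep1
  obtain ⟨i2, j2, i2', j2', hs2, ht2, adj2, hq21, hq22, hperf21, hperf22⟩ := hstep2
  have hFq1 : Filling γ q1 :=
    step_inv hF ⟨i1, j1, i1', j1', hs1, ht1, adj1, hq11, hq12, hperf11, hperf12⟩
  have hFq2 : Filling γ q2 :=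
    step_inv hF ⟨i2, j2, i2', j2', hs2, ht2, adj2, hq21, hq22, hperf21, hperf22⟩
  obtain ⟨v11, v12, v13, v14, v15, v16⟩ := step_vals adj1 hq11 hq12
  obtain ⟨v21, v22, v23, v24, v25, v26⟩ := step_vals adj2 hq21 hq22
  have hQ11 : IsPerforated γ (mv p.1 i1 j1 i1' j1') := by
    have := hperf11; rw [hq11] at this; exact this
  have hQ12 : IsPerforated γ (mv p.2 i1' j1' i1 j1) := by
    have := hperf12; rw [hq12] at this; exact this
  have hQ21 : IsPerforated γ (mv p.1 i2 j2 i2' j2') := by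
    have := hperf21; rw [hq21] at this; exact this
  have hQ22 : IsPerforated γ (mv p.2 i2' j2' i2 j2) := by
    have := hperf22; rw [hq22] at this; exact this
  by_cases hq : q1 = q2
  · exact ⟨q1, Relation.ReflGen.refl, hq ▸ Relation.ReflTransGen.refl⟩
  -- the two steps have distinct sources
  have hss : ¬(i1 = i2 ∧ j1 = j2) := by
    rintro ⟨hsi, hsj⟩
    rcases adj1 with ⟨e1a, e1b⟩ | ⟨e1a, e1b⟩ <;> rcases adj2 with ⟨e2a, e2b⟩ | ⟨e2a, e2b⟩
    · -- both horizontal: same step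
      apply hq
      have hh : (i2 : ℕ) = i1 ∧ j2 = j1 ∧ i2' = i1' ∧ j2' = j1' := by omega
      refine Prod.ext ?_ ?_
      · rw [hq11, hq21, hh.1, hh.2.1, hh.2.2.1, hh.2.2.2]
      · rw [hq12, hq22, hh.1, hh.2.1, hh.2.2.1, hh.2.2.2]
    · -- σ1 horizontal, σ2 vertical, same source: impossible
      rw [e1a, e1b] at hQ12 ht1
      rw [e2a, e2b, ← hsi, ← hsj] at hQ22 ht2
      exact no_two_targets ht1 ht2 hQ12 hQ22
    · -- σ1 vertical, σ2 horizontal, same source: impossible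
      rw [e1a, e1b] at hQ12 ht1
      rw [e2a, e2b, ← hsi, ← hsj] at hQ22 ht2
      exact no_two_targets ht2 ht1 hQ22 hQ12
    · -- both vertical: same step
      apply hq
      have hh : (i2 : ℕ) = i1 ∧ j2 = j1 ∧ i2' = i1' ∧ j2' = j1' := by omega
      refine Prod.ext ?_ ?_
      · rw [hq11, hq21, hh.1, hh.2.1, hh.2.2.1, hh.2.2.2]
      · rw [hq12, hq22, hh.1, hh.2.1, hh.2.2.1, hh.2.2.2]
  -- the two steps have distinct targets
  have htt : ¬(i1' = i2' ∧ j1' = j2') := by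
    rintro ⟨hti, htj⟩
    rcases adj1 with ⟨e1a, e1b⟩ | ⟨e1a, e1b⟩ <;> rcases adj2 with ⟨e2a, e2b⟩ | ⟨e2a, e2b⟩
    · exact hss ⟨by omega, by omega⟩
    · -- σ1 horizontal, σ2 vertical, same target: impossible
      have hI : (i1 : ℕ) = i2 + 1 := by omega
      have hJ : (j2 : ℕ) = j1 + 1 := by omega
      rw [e1a, e1b, hI] at hQ11
      rw [hI] at hs1
      rw [e2a, e2b, hJ] at hQ21
      rw [hJ] at hs2
      exact no_two_sources hs1 hs2 hQ11 hQ21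
    · -- σ1 vertical, σ2 horizontal, same target: impossible
      have hI : (i2 : ℕ) = i1 + 1 := by omega
      have hJ : (j1 : ℕ) = j2 + 1 := by omega
      rw [e2a, e2b, hI] at hQ21
      rw [hI] at hs2
      rw [e1a, e1b, hJ] at hQ11
      rw [hJ] at hs1
      exact no_two_sources hs2 hs1 hQ21 hQ11
    · exact hss ⟨by omega, by omega⟩
  -- the source of each step differs from the target of the other
  have nst : ¬(i1 = i2' ∧ j1 = j2') := by
    rintro ⟨hx, hy⟩
    apply ht2
    rw [← hx, ← hy]
    exact hF.2.2.1 i1 j1 hs1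
  have nts : ¬(i2 = i1' ∧ j2 = j1') := by
    rintro ⟨hx, hy⟩
    apply ht1
    rw [← hx, ← hy]
    exact hF.2.2.1 i2 j2 hs2
  have ne1 : ¬(i1 = i1' ∧ j1 = j1') := by rcases adj1 with ⟨h, h'⟩ | ⟨h, h'⟩ <;> omega
  have ne2 : ¬(i2 = i2' ∧ j2 = j2') := by rcases adj2 with ⟨h, h'⟩ | ⟨h, h'⟩ <;> omega
  -- hard-pair comparisons for the first components
  have hc12 : j1' = j2' → i1' < i2' → p.1 i1 j1 < p.1 i2 j2 :=
    fun hcc hlt => hard_col_SE hF.1 adj1 adj2 hs1 hs2 hss nst nts hQ11 hQ21 hcc hlt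
  have hc21 : j2' = j1' → i2' < i1' → p.1 i2 j2 < p.1 i1 j1 :=
    fun hcc hlt => hard_col_SE hF.1 adj2 adj1 hs2 hs1 (fun hc => hss ⟨hc.1.symm, hc.2.symm⟩)
      nts nst hQ21 hQ11 hcc hlt
  have hn12 : i1' ≤ i2' → j1' ≤ j2' → p.1 i1 j1 ≤ p.1 i2 j2 :=
    fun h h' => hard_nw_SE adj1 hs1 hs2 hss nst hQ21 h h'
  have hn21 : i2' ≤ i1' → j2' ≤ j1' → p.1 i2 j2 ≤ p.1 i1 j1 :=
    fun h h' => hard_nw_SE adj2 hs2 hs1 (fun hc => hss ⟨hc.1.symm, hc.2.symm⟩) nts hQ11 h h'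
  have perfE1 : IsPerforated γ (mv (mv p.1 i1 j1 i1' j1') i2 j2 i2' j2') :=
    perf_double ne1 ne2 hss htt nst nts hQ11 hQ21 hc12 hc21 hn12 hn21
  -- hard-pair comparisons for the second components (north-west moves)
  have nts2 : ¬(i1' = i2 ∧ j1' = j2) := fun hc => nts ⟨hc.1.symm, hc.2.symm⟩
  have nst2 : ¬(i2' = i1 ∧ j2' = j1) := fun hc => nst ⟨hc.1.symm, hc.2.symm⟩
  have ne1' : ¬(i1' = i1 ∧ j1' = j1) := fun hc => ne1 ⟨hc.1.symm, hc.2.symm⟩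
  have ne2' : ¬(i2' = i2 ∧ j2' = j2) := fun hc => ne2 ⟨hc.1.symm, hc.2.symm⟩
  have hc12' : j1 = j2 → i1 < i2 → p.2 i1' j1' < p.2 i2' j2' :=
    fun hcc hlt => hard_col_NW hF.2.1 adj1 adj2 ht1 ht2 htt nts2 nst2 hQ12 hQ22 hcc hlt
  have hc21' : j2 = j1 → i2 < i1 → p.2 i2' j2' < p.2 i1' j1' :=
    fun hcc hlt => hard_col_NW hF.2.1 adj2 adj1 ht2 ht1 (fun hc => htt ⟨hc.1.symm, hc.2.symm⟩)
      nst2 nts2 hQ22 hQ12 hcc hlt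
  have hn12' : i1 ≤ i2 → j1 ≤ j2 → p.2 i1' j1' ≤ p.2 i2' j2' :=
    fun h h' => hard_nw_NW adj2 ht1 ht2 htt nst2 hQ12 h h'
  have hn21' : i2 ≤ i1 → j2 ≤ j1 → p.2 i2' j2' ≤ p.2 i1' j1' :=
    fun h h' => hard_nw_NW adj1 ht2 ht1 (fun hc => htt ⟨hc.1.symm, hc.2.symm⟩) nts2 hQ22 h h'
  have perfE2 : IsPerforated γ (mv (mv p.2 i1' j1' i1 j1) i2' j2' i2 j2) :=
    perf_double ne1' ne2' htt hss nts2 nst2 hQ12 hQ22 hc12' hc21' hn12' hn21'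
  -- the common extension
  have hcomm1 : mv q1.1 i2 j2 i2' j2' = mv q2.1 i1 j1 i1' j1' := by
    rw [hq11, hq21]
    exact mv_comm ne1 ne2 hss htt nst nts
  have hcomm2 : mv q1.2 i2' j2' i2 j2 = mv q2.2 i1' j1' i1 j1 := by
    rw [hq12, hq22]
    exact mv_comm ne1' ne2' htt hss nts2 nst2
  refine ⟨(mv q1.1 i2 j2 i2' j2', mv q1.2 i2' j2' i2 j2),
    Relation.ReflGen.single ⟨?_, hFq1⟩, Relation.ReflTransGen.single ⟨?_, hFq2⟩⟩
  · refine ⟨i2, j2, i2', j2', ?_, ?_, adj2, rfl, rfl, ?_, ?_⟩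
    · show q1.1 i2 j2 ≠ 0
      rw [v15 i2 j2 (fun hc => hss ⟨hc.1.symm, hc.2.symm⟩) nts]
      exact hs2
    · show q1.2 i2' j2' ≠ 0
      rw [v16 i2' j2' (fun hc => nst ⟨hc.1.symm, hc.2.symm⟩)
        (fun hc => htt ⟨hc.1.symm, hc.2.symm⟩)]
      exact ht2
    · show IsPerforated γ (mv q1.1 i2 j2 i2' j2')
      rw [hq11]; exact perfE1
    · show IsPerforated γ (mv q1.2 i2' j2' i2 j2)
      rw [hq12]; exact perfE2
  · refine ⟨i1, j1, i1', j1', ?_, ?_, adj1, ?_, ?_, ?_, ?_⟩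
    · show q2.1 i1 j1 ≠ 0
      rw [v25 i1 j1 hss nst]
      exact hs1
    · show q2.2 i1' j1' ≠ 0
      rw [v26 i1' j1' nts2 htt]
      exact ht1
    · exact hcomm1
    · exact hcomm2
    · show IsPerforated γ (mv q1.1 i2 j2 i2' j2')
      rw [hq11]; exact perfE1
    · show IsPerforated γ (mv q1.2 i2' j2' i2 j2)
      rw [hq12]; exact perfE2

lemma filling_reach {p q : (ℕ → ℕ → ℕ) × (ℕ → ℕ → ℕ)} (h0 : Filling γ p)
    (h : Relation.ReflTransGen (SwitchStep γ) p q) : Filling γ q := by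
  induction h with
  | refl => exact h0
  | tail _ hstep ih => exact step_inv ih hstep

lemma toR {a b : (ℕ → ℕ → ℕ) × (ℕ → ℕ → ℕ)} (h0 : Filling γ a)
    (h : Relation.ReflTransGen (SwitchStep γ) a b) :
    Relation.ReflTransGen (fun x y => SwitchStep γ x y ∧ Filling γ x) a b := by
  induction h with
  | refl => exact Relation.ReflTransGen.refl
  | tail hab hstep ih => exact ih.tail ⟨hstep, filling_reach h0 hab⟩

lemma rev_chain {p q : (ℕ → ℕ → ℕ) × (ℕ → ℕ → ℕ)} (h0 : Filling γ p)
    (h : Relation.ReflTransGen (SwitchStep γ) p q) :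
    Relation.ReflTransGen (SwitchStep γ) (q.2, q.1) (p.2, p.1) := by
  induction h with
  | refl => exact Relation.ReflTransGen.refl
  | tail hab hstep ih =>
    exact Relation.ReflTransGen.head (step_rev (filling_reach h0 hab) hstep) ih

lemma rtg_term_eq {R : ((ℕ → ℕ → ℕ) × (ℕ → ℕ → ℕ)) → ((ℕ → ℕ → ℕ) × (ℕ → ℕ → ℕ)) → Prop}
    {x y : (ℕ → ℕ → ℕ) × (ℕ → ℕ → ℕ)} (hterm : ∀ q, ¬ R x q)
    (h : Relation.ReflTransGen R x y) : x = y := by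
  rcases Relation.ReflTransGen.cases_head h with rfl | ⟨z, hz, -⟩
  · rfl
  · exact absurd hz (hterm z)

lemma part_anti {p : ℕ → ℕ} (hp : ∀ i, p (i + 1) ≤ p i) {i j : ℕ} (h : i ≤ j) :
    p j ≤ p i := by
  induction h with
  | refl => exact le_refl _
  | step _ ih => exact le_trans (hp _) ih

lemma initial_filling {mu la nu : ℕ → ℕ} (hla : ∀ i, la (i + 1) ≤ la i)
    (hnu : ∀ i, nu (i + 1) ≤ nu i)
    (h1 : ∀ i, mu i ≤ la i) (h2 : ∀ i, la i ≤ nu i)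
    {S T : ℕ → ℕ → ℕ} (hS : IsSkewSSYT la mu S) (hT : IsSkewSSYT nu la T) :
    Filling (SkewYCell nu mu) (S, T) := by
  refine ⟨⟨?_, ?_, ?_⟩, ⟨?_, ?_, ?_⟩, ?_, ?_⟩
  · intro i j h
    obtain ⟨hn, hm⟩ := (hS.1 i j).mp h
    exact ⟨lt_of_lt_of_le hn (h2 i), hm⟩
  · intro i i' j hlt h h'
    exact hS.2.2 i i' j hlt ((hS.1 i j).mp h) ((hS.1 i' j).mp h')
  · intro i j i' j' hii hjj h' h
    have c' := (hS.1 i' j').mp h'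
    have c := (hS.1 i j).mp h
    rcases eq_or_lt_of_le hii with heq | hlt
    · rw [heq] at c' ⊢
      exact hS.2.1 i j' j hjj c' c
    · have cm : SkewYCell la mu i' j :=
        ⟨lt_of_lt_of_le c.1 (part_anti hla (le_of_lt hlt)),
         fun hc => c'.2 (lt_of_le_of_lt hjj hc)⟩
      exact le_trans (hS.2.1 i' j' j hjj c' cm) (le_of_lt (hS.2.2 i' i j hlt cm c))
  · intro i j h
    obtain ⟨hn, hl⟩ := (hT.1 i j).mp h
    exact ⟨hn, fun hc => hl (lt_of_lt_of_le hc (h1 i))⟩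
  · intro i i' j hlt h h'
    exact hT.2.2 i i' j hlt ((hT.1 i j).mp h) ((hT.1 i' j).mp h')
  · intro i j i' j' hii hjj h' h
    have c' := (hT.1 i' j').mp h'
    have c := (hT.1 i j).mp h
    rcases eq_or_lt_of_le hii with heq | hlt
    · rw [heq] at c' ⊢
      exact hT.2.1 i j' j hjj c' c
    · have cm : SkewYCell nu la i' j :=
        ⟨lt_of_lt_of_le c.1 (part_anti hnu (le_of_lt hlt)),
         fun hc => c'.2 (lt_of_le_of_lt hjj hc)⟩
      exact le_trans (hT.2.1 i' j' j hjj c' cm) (le_of_lt (hT.2.2 i' i j hlt cm c))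
  · intro i j h
    have c := (hS.1 i j).mp h
    by_contra hT0
    exact ((hT.1 i j).mp hT0).2 c.1
  · intro i j hc
    by_cases hj : j < la i
    · exact Or.inl ((hS.1 i j).mpr ⟨hj, hc.2⟩)
    · exact Or.inr ((hT.1 i j).mpr ⟨hc.1, hj⟩)

lemma term_TS {mu la nu : ℕ → ℕ} (hla : ∀ i, la (i + 1) ≤ la i)
    {S T : ℕ → ℕ → ℕ} (hS : IsSkewSSYT la mu S) (hT : IsSkewSSYT nu la T) :
    ∀ q, ¬ SwitchStep (SkewYCell nu mu) (T, S) q := by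
  rintro q ⟨i, j, i', j', hTij, hSij, adj, -⟩
  have c1 := (hT.1 i j).mp hTij
  have c2 := (hS.1 i' j').mp hSij
  have hb : la i ≤ j := Nat.le_of_not_lt c1.2
  have hb2 : j' < la i' := c2.1
  rcases adj with ⟨e1, e2⟩ | ⟨e1, e2⟩
  · rw [e1, e2] at hb2
    omega
  · rw [e1, e2] at hb2
    have := hla i
    omega

end SwitchInvolutionAux

/-- Benkart–Sottile–Stroomer.  Tableau switching is an
involution: if the switching procedure applied to `S ∪ T` yields the terminal
configuration `c = (S_T, ^S T)`, then the switching procedure applied to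
`^S T ∪ S_T` (i.e. to the configuration `(c.2, c.1)`) returns `S ∪ T`. -/
theorem switching_involution
    (mu la nu : ℕ → ℕ)
    (hmu : IsPartitionFun mu) (hla : IsPartitionFun la) (hnu : IsPartitionFun nu)
    (h1 : ∀ i, mu i ≤ la i) (h2 : ∀ i, la i ≤ nu i)
    (S T : ℕ → ℕ → ℕ)
    (hS : IsSkewSSYT la mu S) (hT : IsSkewSSYT nu la T)
    (c d : (ℕ → ℕ → ℕ) × (ℕ → ℕ → ℕ))
    (hreach : Relation.ReflTransGen (SwitchStep (SkewYCell nu mu)) (S, T) c)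
    (hterm : ∀ q, ¬ SwitchStep (SkewYCell nu mu) c q)
    (hreach2 : Relation.ReflTransGen (SwitchStep (SkewYCell nu mu)) (c.2, c.1) d)
    (hterm2 : ∀ q, ¬ SwitchStep (SkewYCell nu mu) d q) :
    d = (T, S) := by
  have h0 : Filling (SkewYCell nu mu) (S, T) :=
    initial_filling hla.1 hnu.1 h1 h2 hS hT
  have hIc : Filling (SkewYCell nu mu) c := filling_reach h0 hreach
  have hIrev : Filling (SkewYCell nu mu) (c.2, c.1) :=
    ⟨hIc.2.1, hIc.1,
     fun i j h => by
       by_contra h1'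
       exact h (hIc.2.2.1 i j h1'),
     fun i j h => (hIc.2.2.2 i j h).symm⟩
  have hrevTS : Relation.ReflTransGen (SwitchStep (SkewYCell nu mu)) (c.2, c.1) (T, S) :=
    rev_chain h0 hreach
  have hab := toR hIrev hreach2
  have hac := toR hIrev hrevTS
  obtain ⟨e, hde, hTSe⟩ :=
    Relation.church_rosser (fun _ _ _ hx hy => diamond hx hy) hab hac
  have hd : d = e := rtg_term_eq (fun q hq => hterm2 q hq.1) hde
  have hts : (T, S) = e := rtg_term_eq (fun q hq => term_TS hla.1 hS hT q hq.1) hTSe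
  exact hd.trans hts.symm

end SLR
end

section
/- For every strict partition λ, every coefficient of the Schur Q-function Q_λ is divisible by 2^{l(λ)}; consequently P_λ = 2^{-l(λ)} Q_λ is a formal power series with integer coefficients. -/
open scoped BigOperators

namespace SLR

/-!
The diagonal cell `(i, i)` of a shifted diagram is the first cell of its row and the last
cell of its column, so the mark of its entry never meets the row and column conditions:
it can be toggled freely without changing the content. Hence the `2 ^ l(λ)` choices of
diagonal marks split the shifted tableaux of any given content into classes of equal size.
-/

def withMark (b : Bool) (e : ℕ) : ℕ := if b then 2 * mval e - 1 else 2 * mval e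

@[simp]
lemma mval_withMark (b : Bool) (e : ℕ) : mval (withMark b e) = mval e := by
  unfold withMark mval; cases b <;> simp <;> omega

@[simp]
lemma withMark_zero (b : Bool) : withMark b 0 = 0 := by
  cases b <;> rfl

lemma withMark_withMark (b b' : Bool) (e : ℕ) : withMark b (withMark b' e) = withMark b e := by
  rw [withMark, mval_withMark]; rfl

lemma withMark_decide_odd (e : ℕ) : withMark (decide (e % 2 = 1)) e = e := by
  unfold withMark mval; split <;> simp_all <;> omega

lemma decide_withMark_odd {e : ℕ} (he : e ≠ 0) (b : Bool) :
    decide (withMark b e % 2 = 1) = b := by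
  unfold withMark mval; cases b <;> simp; omega

def markDiag (c : ℕ → Bool) (T : ℕ → ℕ → ℕ) : ℕ → ℕ → ℕ :=
  fun i j => if i = j then withMark (c i) (T i i) else T i j

@[simp]
lemma markDiag_self (c : ℕ → Bool) (T : ℕ → ℕ → ℕ) (i : ℕ) :
    markDiag c T i i = withMark (c i) (T i i) := if_pos rfl

lemma markDiag_of_ne (c : ℕ → Bool) (T : ℕ → ℕ → ℕ) {i j : ℕ} (h : i ≠ j) :
    markDiag c T i j = T i j := if_neg h

@[simp]
lemma mval_markDiag (c : ℕ → Bool) (T : ℕ → ℕ → ℕ) (i j : ℕ) :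
    mval (markDiag c T i j) = mval (T i j) := by
  by_cases h : i = j
  · subst h; simp
  · rw [markDiag_of_ne c T h]

lemma markDiag_markDiag (c c' : ℕ → Bool) (T : ℕ → ℕ → ℕ) :
    markDiag c (markDiag c' T) = markDiag c T := by
  funext i j
  by_cases h : i = j
  · subst h; simp [withMark_withMark]
  · simp only [markDiag_of_ne _ _ h]

lemma markDiag_eq_self {c : ℕ → Bool} {T : ℕ → ℕ → ℕ}
    (h : ∀ i, withMark (c i) (T i i) = T i i) : markDiag c T = T := by
  funext i j
  by_cases hij : i = j
  · subst hij; simpa using h i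
  · exact markDiag_of_ne c T hij

namespace IsMarkedFilling

variable {cell : ℕ → ℕ → Prop} {T : ℕ → ℕ → ℕ}

lemma diag_le_of_mval_eq (hT : IsMarkedFilling cell T) {i j e : ℕ} (hij : i < j)
    (hii : cell i i) (hj : cell i j) (he : mval e = mval (T i i)) :
    e ≤ T i j ∧ (e = T i j → e % 2 = 0) := by
  obtain ⟨hne, hrow, -, hrowUniq, -⟩ := hT
  have h0 := (hne i i).2 hii
  have hle := hrow i i j hij.le hii hj
  have heven := fun heq => hrowUniq i i j hij hii hj heq
  unfold mval at *; omega

lemma le_diag_of_mval_eq (hT : IsMarkedFilling cell T) {r i e : ℕ} (hri : r < i)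
    (hr : cell r i) (hii : cell i i) (he : mval e = mval (T i i)) :
    T r i ≤ e ∧ (T r i = e → T r i % 2 = 1) := by
  obtain ⟨hne, -, hcol, -, hcolUniq⟩ := hT
  have h0 := (hne i i).2 hii
  have hle := hcol r i i hri.le hr hii
  have hodd := fun heq => hcolUniq r i i hri hr hii heq
  unfold mval at *; omega

/-- Under `hcell` a diagonal cell is first in its row and last in its column, so the
mark of its entry can be changed freely. -/
lemma of_mval_diag (hcell : ∀ i j, cell i j → i ≤ j) (hT : IsMarkedFilling cell T)
    {T' : ℕ → ℕ → ℕ} (hoff : ∀ i j, i ≠ j → T' i j = T i j)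
    (hdiag : ∀ i, mval (T' i i) = mval (T i i)) : IsMarkedFilling cell T' := by
  obtain ⟨hne, hrow, hcol, hrowUniq, hcolUniq⟩ := id hT
  refine ⟨fun i j => ?_, fun i j j' hjj' hj hj' => ?_, fun i i' j hii' hi hi' => ?_,
    fun i j j' hjj' hj hj' heq => ?_, fun i i' j hii' hi hi' heq => ?_⟩
  · by_cases hij : i = j
    · subst hij
      have := hdiag i
      rw [← hne i i]; unfold mval at this; omega
    · rw [hoff i j hij, hne]
  · rcases (hcell i j hj).eq_or_lt with rfl | hij
    · rcases (hcell i j' hj').eq_or_lt with rfl | hij'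
      · exact le_rfl
      · rw [hoff i j' hij'.ne]
        exact (hT.diag_le_of_mval_eq hij' hj hj' (hdiag i)).1
    · rw [hoff i j hij.ne, hoff i j' (by omega)]
      exact hrow i j j' hjj' hj hj'
  · rcases hii'.eq_or_lt with rfl | hlt
    · exact le_rfl
    rw [hoff i j (by have := hcell i' j hi'; omega)]
    by_cases hi'j : i' = j
    · subst hi'j
      exact (hT.le_diag_of_mval_eq hlt hi hi' (hdiag i')).1
    · rw [hoff i' j hi'j]
      exact hcol i i' j hii' hi hi'
  · rw [hoff i j' (by have := hcell i j hj; omega)] at heq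
    by_cases hij : i = j
    · subst hij
      exact (hT.diag_le_of_mval_eq hjj' hj hj' (hdiag i)).2 heq
    · rw [hoff i j hij] at heq ⊢
      exact hrowUniq i j j' hjj' hj hj' heq
  · rw [hoff i j (by have := hcell i' j hi'; omega)] at heq ⊢
    by_cases hi'j : i' = j
    · subst hi'j
      exact (hT.le_diag_of_mval_eq hii' hi hi' (hdiag i')).2 heq
    · rw [hoff i' j hi'j] at heq
      exact hcolUniq i i' j hii' hi hi' heq

lemma markDiag (hcell : ∀ i j, cell i j → i ≤ j) (hT : IsMarkedFilling cell T)
    (c : ℕ → Bool) : IsMarkedFilling cell (SLR.markDiag c T) :=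
  hT.of_mval_diag hcell (fun _ _ h => markDiag_of_ne c T h) fun i => mval_markDiag c T i i

end IsMarkedFilling

lemma HasContent.markDiag {T : ℕ → ℕ → ℕ} {γ : ℕ → ℕ} (hT : HasContent T γ)
    (c : ℕ → Bool) : HasContent (markDiag c T) γ := by
  simpa only [HasContent, mval_markDiag] using hT

noncomputable def equivDiagMarks {P : (ℕ → ℕ → ℕ) → Prop} {s : Set ℕ}
    (hP : ∀ T c, P T → P (markDiag c T)) (hs : ∀ T, P T → ∀ i, T i i ≠ 0 ↔ i ∈ s) :
    {T // P T} ≃ (s → Bool) × {T // P T ∧ ∀ i, T i i % 2 = 0} where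
  toFun T := (fun i => decide (T.1 i i % 2 = 1),
    ⟨markDiag (fun _ => false) T.1, hP _ _ T.2, fun i => by simp [withMark]⟩)
  invFun p :=
    ⟨markDiag (Function.extend Subtype.val p.1 fun _ => false) p.2.1, hP _ _ p.2.2.1⟩
  left_inv T := by
    refine Subtype.ext ((markDiag_markDiag _ _ _).trans (markDiag_eq_self fun i => ?_))
    by_cases hi : i ∈ s
    · rw [Subtype.val_injective.extend_apply _ _ ⟨i, hi⟩]
      exact withMark_decide_odd _
    · have : T.1 i i = 0 := not_not.1 fun h => hi ((hs _ T.2 i).1 h)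
      simp [this]
  right_inv p := by
    refine Prod.ext (funext fun i => ?_) (Subtype.ext ?_)
    · simp only [markDiag_self, Subtype.val_injective.extend_apply]
      exact decide_withMark_odd ((hs _ p.2.2.1 i).2 i.2) _
    · refine (markDiag_markDiag _ _ _).trans (markDiag_eq_self fun i => ?_)
      simpa [p.2.2.2 i] using withMark_decide_odd (p.2.1 i i)

lemma two_pow_ncard_diag_dvd_card {cell : ℕ → ℕ → Prop}
    (hcell : ∀ i j, cell i j → i ≤ j) (γ : ℕ → ℕ) :
    2 ^ Set.ncard {i | cell i i} ∣
      Nat.card {T // IsMarkedFilling cell T ∧ HasContent T γ} := by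
  rw [Nat.card_congr (equivDiagMarks (s := {i | cell i i})
      (fun T c hT => ⟨hT.1.markDiag hcell c, hT.2.markDiag c⟩)
      (fun T hT i => hT.1.1 i i)), Nat.card_prod]
  refine Dvd.dvd.mul_right ?_ _
  rcases Set.finite_or_infinite {i | cell i i} with hfin | hinf
  · have := hfin.to_subtype
    rw [Nat.card_fun, Nat.card_eq_fintype_card, Fintype.card_bool,
      Nat.card_coe_set_eq]
  · simp [hinf.ncard]

theorem schurQ_coeff_divisible_general
    (lam : ℕ → ℕ) :
    (∀ d : ℕ →₀ ℕ, (2 ^ len lam : ℤ) ∣ MvPowerSeries.coeff d (schurQZ lam)) ∧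
    ∃ P : MvPowerSeries ℕ ℤ, schurQZ lam = (2 ^ len lam : ℤ) • P := by
  have hdiag : {i | SCell lam i i} = {i | lam i ≠ 0} := by
    ext i; simp only [SCell, Set.mem_ofPred_eq]; omega
  have hdvd (d : ℕ →₀ ℕ) : (2 ^ len lam : ℤ) ∣ MvPowerSeries.coeff d (schurQZ lam) := by
    have h := two_pow_ncard_diag_dvd_card (cell := SCell lam) (fun _ _ h => h.1) d
    rw [hdiag, ← len] at h
    rw [MvPowerSeries.coeff_apply]
    exact Int.natCast_dvd_natCast.2 h
  choose P hP using hdvd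
  exact ⟨fun d => ⟨P d, hP d⟩, P,
    MvPowerSeries.ext fun d => (hP d).trans (MvPowerSeries.coeff_smul (σ := ℕ) P d _).symm⟩

/-- For every strict partition `λ`, every coefficient of the
Schur Q-function `Q_λ` is divisible by `2^{l(λ)}`; consequently
`P_λ = 2^{-l(λ)} Q_λ` is a formal power series with integer coefficients. -/
theorem schurQ_coeff_divisible
    (lam : ℕ → ℕ) (hlam : IsStrictPartitionFun lam) :
    (∀ d : ℕ →₀ ℕ, (2 ^ len lam : ℤ) ∣ MvPowerSeries.coeff d (schurQZ lam)) ∧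
    ∃ P : MvPowerSeries ℕ ℤ, schurQZ lam = (2 ^ len lam : ℤ) • P :=
  schurQ_coeff_divisible_general lam

end SLR
end
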